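/- If G is an R-disjoint graph, then every maximum matching M of G contains exactly ⌊|V(C)|/2⌋ edges from each odd cycle C of G. -/

import Mathlib

open SimpleGraph

universe u

variable {V : Type u}

/-- `S` is an independent set of `G`. -/
def IsIndep (G : SimpleGraph V) (S : Set V) : Prop :=
  ∀ ⦃u⦄, u ∈ S → ∀ ⦃v⦄, v ∈ S → ¬ G.Adj u v

/-- The neighborhood `N(S)` of a vertex set. -/
def NSet (G : SimpleGraph V) (S : Set V) : Set V := {v | ∃ u ∈ S, G.Adj u v}

/-- `S` is a maximum independent set of `G`. -/
def IsMaxIndep (G : SimpleGraph V) (S : Set V) : Prop :=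
  IsIndep G S ∧ ∀ T : Set V, IsIndep G T → T.ncard ≤ S.ncard

/-- The independence number `α(G)`. -/
noncomputable def indepNum (G : SimpleGraph V) : ℕ :=
  sSup {n | ∃ S : Set V, IsIndep G S ∧ S.ncard = n}

/-- `core(G)`: intersection of all maximum independent sets. -/
def core (G : SimpleGraph V) : Set V := ⋂₀ {S | IsMaxIndep G S}

/-- `corona(G)`: union of all maximum independent sets. -/
def corona (G : SimpleGraph V) : Set V := ⋃₀ {S | IsMaxIndep G S}

/-- The difference `d_G(S) = |S| - |N(S)|`, as an integer. -/
noncomputable def diffZ (G : SimpleGraph V) (S : Set V) : ℤ :=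
  (S.ncard : ℤ) - ((NSet G S).ncard : ℤ)

/-- `S` is a critical independent set: independent and maximizing `|S| - |N(S)|`
among independent sets. -/
def IsCriticalIndep (G : SimpleGraph V) (S : Set V) : Prop :=
  IsIndep G S ∧ ∀ T : Set V, IsIndep G T → diffZ G T ≤ diffZ G S

/-- `ker(G)`: intersection of all critical independent sets. -/
def kerSet (G : SimpleGraph V) : Set V := ⋂₀ {S | IsCriticalIndep G S}

/-- `M` is a maximum matching of `G`. -/
def IsMaxMatching (G : SimpleGraph V) (M : G.Subgraph) : Prop :=
  M.IsMatching ∧ ∀ M' : G.Subgraph, M'.IsMatching → M'.edgeSet.ncard ≤ M.edgeSet.ncard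

/-- The matching number `μ(G)`. -/
noncomputable def matchNum (G : SimpleGraph V) : ℕ :=
  sSup {n | ∃ M : G.Subgraph, M.IsMatching ∧ M.edgeSet.ncard = n}

/-- `D(G)`: vertices missed by some maximum matching. -/
def DSet (G : SimpleGraph V) : Set V :=
  {v | ∃ M : G.Subgraph, IsMaxMatching G M ∧ v ∉ M.verts}

/-- `C` is the vertex set of an odd cycle of `G`. -/
def IsOddCycle (G : SimpleGraph V) (C : Set V) : Prop :=
  ∃ (u : V) (w : G.Walk u u), w.IsCycle ∧ Odd w.length ∧ ∀ v, v ∈ w.support ↔ v ∈ C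

/-- An edge list is `M`-alternating: consecutive edges, exactly one in `M`. -/
def Alternating (G : SimpleGraph V) (M : G.Subgraph) (l : List (Sym2 V)) : Prop :=
  List.Chain' (fun e f => (e ∈ M.edgeSet ↔ f ∉ M.edgeSet)) l

/-- `w` is an `M`-blossom with base `b`: an odd cycle, alternating, whose two
edges at the base are unmatched (so it carries `⌊length/2⌋` matched edges). -/
structure IsBlossom (G : SimpleGraph V) (M : G.Subgraph) (b : V) (w : G.Walk b b) : Prop where
  cyc : w.IsCycle
  odd : Odd w.length
  alt : Alternating G M w.edges
  first : ∀ e ∈ w.edges.head?, e ∉ M.edgeSet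
  last : ∀ e ∈ w.edges.getLast?, e ∉ M.edgeSet

/-- `p` is an `M`-stem from base `b` to root `r`: an even alternating path
starting (if nonempty) with a matched edge, whose root is `M`-unsaturated. -/
structure IsStem (G : SimpleGraph V) (M : G.Subgraph) (b r : V) (p : G.Walk b r) : Prop where
  path : p.IsPath
  even : Even p.length
  alt : Alternating G M p.edges
  first : ∀ e ∈ p.edges.head?, e ∈ M.edgeSet
  root : r ∉ M.verts

/-- `F` is the vertex set of an `M`-flower of `G` whose blossom has vertex set `C`. -/
def IsFlowerOn (G : SimpleGraph V) (M : G.Subgraph) (C F : Set V) : Prop :=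
  ∃ (b r : V) (w : G.Walk b b) (p : G.Walk b r),
    IsBlossom G M b w ∧ IsStem G M b r p ∧
    (∀ v, v ∈ w.support ↔ v ∈ C) ∧
    (∀ v, v ∈ p.support → v ∈ w.support → v = b) ∧
    F = {v | v ∈ w.support ∨ v ∈ p.support}

/-- The reach set `R(C)` of an odd cycle `C`: union of the vertex sets of all
`M`-flowers with blossom `C`, over all maximum matchings `M`. -/
def reach (G : SimpleGraph V) (C : Set V) : Set V :=
  ⋃₀ {F | ∃ M : G.Subgraph, IsMaxMatching G M ∧ IsFlowerOn G M C F}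

/-- `G` is `R`-disjoint: it has an odd cycle, every odd cycle has nonempty reach
set, and reach sets of distinct odd cycles are disjoint. -/
def RDisjoint (G : SimpleGraph V) : Prop :=
  (∃ C : Set V, IsOddCycle G C) ∧
  (∀ C : Set V, IsOddCycle G C → (reach G C).Nonempty) ∧
  (∀ C C' : Set V, IsOddCycle G C → IsOddCycle G C' → C ≠ C' →
    reach G C ∩ reach G C' = ∅)

/-- `B(G) = V(G) \ ⋃_C R(C)`. -/
def bipartPart (G : SimpleGraph V) : Set V :=
  {v | ∀ C : Set V, IsOddCycle G C → v ∉ reach G C}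

/-- `G` is bipartite: its vertex set splits into two independent sets. -/
def IsBipartiteGraph (G : SimpleGraph V) : Prop :=
  ∃ A B : Set V, (∀ v, v ∈ A ∨ v ∈ B) ∧ A ∩ B = ∅ ∧ IsIndep G A ∧ IsIndep G B

/-- `G` is almost bipartite: it has exactly one odd cycle. -/
def AlmostBipartite (G : SimpleGraph V) : Prop := ∃! C : Set V, IsOddCycle G C

/-- `G` is a König–Egerváry graph: `α(G) + μ(G) = |V(G)|`. -/
def IsKE {W : Type*} (G : SimpleGraph W) : Prop :=
  _root_.indepNum G + matchNum G = Nat.card W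

/-!
Let `C` be an odd cycle with `|C| = 2k + 1`. Since `R(C)` is nonempty there is a maximum
matching `M₀` with a flower on `C`; its blossom carries `k` edges of `M₀` covering `C` minus the
base, and flipping the stem turns `M₀` into a maximum matching `M₁` with `k` edges inside `C` and
no edge between `C` and the rest of `G`.

R-disjointness forbids ears: a path of length at least two between two vertices of `C` with no
inner vertex on `C` closes, with one of the two arcs of `C`, an odd cycle other than `C` sharing a
vertex with it, and since every odd cycle lies in its own reach set the two reach sets meet. Hence a vertex reaches `C` (through a walk meeting `C` only at its end) in at most one
vertex, and labelling vertices by these attachment sets splits the edges not inside `C` into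
blocks, each block meeting `C` in at most one vertex `u`. For a maximum matching `M`, replacing the
edges of `M₁` in one block by those of `M`, and the edges of `M₁` inside `C` by a `k`-matching of
`C - u`, gives a matching; so in every block `M` has at most as many edges as `M₁`. Summing over
blocks, `M` has at most as many edges outside `C` as `M₁`, hence at least `k` inside `C`; and a
matching inside the odd set `C` has at most `k` edges.
-/

lemma Set.sym2_mono {α : Type*} {s t : Set α} (h : s ⊆ t) : s.sym2 ⊆ t.sym2 :=
  fun _ hz => Set.mem_sym2_iff_subset.mpr ((Set.mem_sym2_iff_subset.mp hz).trans h)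

lemma Set.disjoint_sym2 {α : Type*} {s t : Set α} (h : Disjoint s t) : Disjoint s.sym2 t.sym2 := by
  refine Set.disjoint_left.mpr fun z hs ht => ?_
  induction z with
  | _ x y => exact Set.disjoint_left.mp h (Set.mk_mem_sym2_iff.mp hs).1 (Set.mk_mem_sym2_iff.mp ht).1

lemma List.ncard_setOf_mem {α : Type*} {l : List α} (h : l.Nodup) :
    {a | a ∈ l}.ncard = l.length := by
  classical
  rw [← List.coe_toFinset, Set.ncard_coe_finset, List.toFinset_card_of_nodup h]

section EdgeMatching

variable {G : SimpleGraph V} {E F : Set (Sym2 V)}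

def IsEdgeMatching (G : SimpleGraph V) (E : Set (Sym2 V)) : Prop :=
  E ⊆ G.edgeSet ∧ E.PairwiseDisjoint ((↑) : Sym2 V → Set V)

lemma IsEdgeMatching.mono (hE : IsEdgeMatching G E) (hFE : F ⊆ E) : IsEdgeMatching G F :=
  ⟨hFE.trans hE.1, hE.2.subset hFE⟩

lemma IsEdgeMatching.eq_of_mem_of_mem (hE : IsEdgeMatching G E) {e f : Sym2 V} {v : V}
    (he : e ∈ E) (hf : f ∈ E) (hve : v ∈ e) (hvf : v ∈ f) : e = f :=
  hE.2.elim he hf (Set.not_disjoint_iff.mpr ⟨v, hve, hvf⟩)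

lemma IsEdgeMatching.union {s t : Set V} (hE : IsEdgeMatching G E) (hF : IsEdgeMatching G F)
    (hEs : E ⊆ s.sym2) (hFt : F ⊆ t.sym2) (hst : Disjoint s t) : IsEdgeMatching G (E ∪ F) :=
  ⟨Set.union_subset hE.1 hF.1, Set.pairwiseDisjoint_union.mpr ⟨hE.2, hF.2, fun _ he _ hf _ =>
    hst.mono (Set.mem_sym2_iff_subset.mp (hEs he)) (Set.mem_sym2_iff_subset.mp (hFt hf))⟩⟩

lemma IsEdgeMatching.two_mul_ncard_le [Finite V] {s : Set V} (hE : IsEdgeMatching G E)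
    (hEs : E ⊆ s.sym2) : 2 * E.ncard ≤ s.ncard := by
  have hcard : ∀ e ∈ E, (e : Set V).ncard = 2 := by
    intro e he
    induction e with
    | _ x y => rw [Sym2.coe_mk, Set.ncard_pair (G.ne_of_adj (hE.1 he))]
  calc 2 * E.ncard = ∑ᶠ e ∈ E, (e : Set V).ncard := by
        rw [finsum_mem_congr rfl hcard, finsum_mem_eq_finite_toFinset_sum _ E.toFinite,
          Finset.sum_const, smul_eq_mul, Set.ncard_eq_toFinset_card E, mul_comm]
    _ = (⋃ e ∈ E, (e : Set V)).ncard :=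
        (E.toFinite.ncard_biUnion (fun _ _ => Set.toFinite _) hE.2).symm
    _ ≤ s.ncard := Set.ncard_le_ncard (Set.iUnion₂_subset fun e he =>
        Set.mem_sym2_iff_subset.mp (hEs he))

lemma SimpleGraph.Subgraph.IsMatching.isEdgeMatching {M : G.Subgraph} (hM : M.IsMatching) :
    IsEdgeMatching G M.edgeSet := by
  refine ⟨M.edgeSet_subset, fun e he f hf hne => Set.disjoint_left.mpr fun v hve hvf => hne ?_⟩
  obtain ⟨x, rfl⟩ := Sym2.mem_iff_exists.mp hve
  obtain ⟨y, rfl⟩ := Sym2.mem_iff_exists.mp hvf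
  rw [hM.eq_of_adj_left (Subgraph.mem_edgeSet.mp he) (Subgraph.mem_edgeSet.mp hf)]

def IsEdgeMatching.toSubgraph (hE : IsEdgeMatching G E) : G.Subgraph where
  verts := {v | ∃ e ∈ E, v ∈ e}
  Adj a b := s(a, b) ∈ E
  adj_sub h := hE.1 h
  edge_vert h := ⟨_, h, Sym2.mem_mk_left _ _⟩
  symm := ⟨fun _ _ h => by rwa [Sym2.eq_swap]⟩

lemma IsEdgeMatching.edgeSet_toSubgraph (hE : IsEdgeMatching G E) :
    hE.toSubgraph.edgeSet = E := by
  ext e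
  induction e with
  | _ a b => exact Subgraph.mem_edgeSet

lemma IsEdgeMatching.isMatching_toSubgraph (hE : IsEdgeMatching G E) :
    hE.toSubgraph.IsMatching := by
  rintro v ⟨e, he, hv⟩
  obtain ⟨w, rfl⟩ := Sym2.mem_iff_exists.mp hv
  exact ⟨w, he, fun y hy => Sym2.congr_right.mp
    (hE.eq_of_mem_of_mem hy he (Sym2.mem_mk_left v y) (Sym2.mem_mk_left v w))⟩

lemma IsMaxMatching.ncard_le {M : G.Subgraph} (hM : IsMaxMatching G M)
    (hE : IsEdgeMatching G E) : E.ncard ≤ M.edgeSet.ncard :=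
  hE.edgeSet_toSubgraph ▸ hM.2 _ hE.isMatching_toSubgraph

end EdgeMatching

section Exchange

variable {α : Type*} {G : SimpleGraph V} {C : Set V} {ρ : V → α} {k : ℕ} {M M₁ : Set (Sym2 V)}

lemma mem_sym2_fiber_or_compl (hρ : ∀ ⦃x y⦄, G.Adj x y → ¬ (x ∈ C ∧ y ∈ C) → ρ x = ρ y)
    {e : Sym2 V} (he : e ∈ G.edgeSet) (heC : e ∉ C.sym2) (a : α) :
    e ∈ (ρ ⁻¹' {a}).sym2 ∨ e ∈ (ρ ⁻¹' {a})ᶜ.sym2 := by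
  induction e with
  | _ x y =>
    have hxy : ρ x = ρ y := hρ he heC
    by_cases hx : ρ x = a
    · exact Or.inl ⟨hx, (hxy.symm.trans hx : ρ y = a)⟩
    · exact Or.inr ⟨hx, fun h => hx (hxy.trans h)⟩

lemma ncard_sdiff_sym2_inter_fiber_le [Finite V]
    (hρ : ∀ ⦃x y⦄, G.Adj x y → ¬ (x ∈ C ∧ y ∈ C) → ρ x = ρ y)
    (hP : ∀ a, ∃ P ⊆ (C \ ρ ⁻¹' {a}).sym2, IsEdgeMatching G P ∧ k ≤ P.ncard)
    (hM : IsEdgeMatching G M) (hM₁ : IsEdgeMatching G M₁)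
    (hmax : ∀ E, IsEdgeMatching G E → E.ncard ≤ M₁.ncard) (hM₁C : (M₁ ∩ C.sym2).ncard ≤ k)
    (hM₁out : M₁ \ C.sym2 ⊆ Cᶜ.sym2) (a : α) :
    (M \ C.sym2 ∩ (ρ ⁻¹' {a}).sym2).ncard ≤ (M₁ \ C.sym2 ∩ (ρ ⁻¹' {a}).sym2).ncard := by
  set B := ρ ⁻¹' {a}
  obtain ⟨P, hPC, hP, hPk⟩ := hP a
  set N := M \ C.sym2 ∩ B.sym2
  set R := (M₁ \ C.sym2) \ B.sym2
  have hR : R ⊆ (Cᶜ \ B).sym2 := fun e he => by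
    rw [Set.sdiff_eq, Set.sym2_inter]
    exact ⟨hM₁out he.1, (mem_sym2_fiber_or_compl hρ (hM₁.1 he.1.1) he.1.2 a).resolve_left he.2⟩
  have hPN : IsEdgeMatching G (P ∪ N) :=
    hP.union (hM.mono fun _ he => he.1.1) hPC Set.inter_subset_right Set.disjoint_sdiff_left
  have hPN_sub : P ∪ N ⊆ (C ∪ B).sym2 :=
    Set.union_subset (hPC.trans (Set.sym2_mono (Set.sdiff_subset.trans Set.subset_union_left)))
      (Set.inter_subset_right.trans (Set.sym2_mono Set.subset_union_right))
  have hdisj : Disjoint (C ∪ B) (Cᶜ \ B) := by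
    rw [Set.disjoint_union_left]
    exact ⟨disjoint_compl_right.mono_right Set.sdiff_subset, Set.disjoint_sdiff_right⟩
  have hE := hPN.union (hM₁.mono fun _ he => he.1.1) hPN_sub hR hdisj
  have hcard : (P ∪ N ∪ R).ncard = P.ncard + N.ncard + R.ncard := by
    rw [Set.ncard_union_eq ((Set.disjoint_sym2 hdisj).mono hPN_sub hR),
      Set.ncard_union_eq ((Set.disjoint_sym2 Set.disjoint_sdiff_left).mono hPC
        Set.inter_subset_right)]
  have h₁ := Set.ncard_inter_add_ncard_sdiff_eq_ncard M₁ C.sym2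
  have h₂ : (M₁ \ C.sym2 ∩ B.sym2).ncard + R.ncard = (M₁ \ C.sym2).ncard :=
    Set.ncard_inter_add_ncard_sdiff_eq_ncard _ _
  have := hmax _ hE
  omega

lemma ncard_sdiff_sym2_le [Fintype α] [Finite V]
    (hρ : ∀ ⦃x y⦄, G.Adj x y → ¬ (x ∈ C ∧ y ∈ C) → ρ x = ρ y)
    (hP : ∀ a, ∃ P ⊆ (C \ ρ ⁻¹' {a}).sym2, IsEdgeMatching G P ∧ k ≤ P.ncard)
    (hM : IsEdgeMatching G M) (hM₁ : IsEdgeMatching G M₁)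
    (hmax : ∀ E, IsEdgeMatching G E → E.ncard ≤ M₁.ncard) (hM₁C : (M₁ ∩ C.sym2).ncard ≤ k)
    (hM₁out : M₁ \ C.sym2 ⊆ Cᶜ.sym2) :
    (M \ C.sym2).ncard ≤ (M₁ \ C.sym2).ncard := by
  have hcover : M \ C.sym2 ⊆ ⋃ a, M \ C.sym2 ∩ (ρ ⁻¹' {a}).sym2 := by
    intro e he
    induction e with
    | _ x y => exact Set.mem_iUnion.mpr ⟨ρ x, he, rfl, (hρ (hM.1 he.1) he.2).symm⟩
  have hdisj : Pairwise (Function.onFun Disjoint fun a => M₁ \ C.sym2 ∩ (ρ ⁻¹' {a}).sym2) :=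
    fun a b hab => (Set.disjoint_sym2 ((Set.disjoint_singleton.mpr hab).preimage ρ)).mono
      Set.inter_subset_right Set.inter_subset_right
  calc (M \ C.sym2).ncard
      ≤ (⋃ a, M \ C.sym2 ∩ (ρ ⁻¹' {a}).sym2).ncard := Set.ncard_le_ncard hcover
    _ ≤ ∑ a, (M \ C.sym2 ∩ (ρ ⁻¹' {a}).sym2).ncard := Set.ncard_iUnion_le_of_fintype _
    _ ≤ ∑ a, (M₁ \ C.sym2 ∩ (ρ ⁻¹' {a}).sym2).ncard := Finset.sum_le_sum fun a _ =>
        ncard_sdiff_sym2_inter_fiber_le hρ hP hM hM₁ hmax hM₁C hM₁out a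
    _ = (⋃ a, M₁ \ C.sym2 ∩ (ρ ⁻¹' {a}).sym2).ncard := by
        rw [Set.ncard_iUnion_of_finite (fun _ => Set.toFinite _) hdisj, finsum_eq_sum_of_fintype]
    _ ≤ (M₁ \ C.sym2).ncard := Set.ncard_le_ncard (Set.iUnion_subset fun _ => Set.inter_subset_left)

lemma exists_isEdgeMatching_sdiff_fiber
    (hP : ∀ u ∈ C, ∃ P ⊆ (C \ {u}).sym2, IsEdgeMatching G P ∧ k ≤ P.ncard) (hρC : Set.InjOn ρ C)
    (hne : C.Nonempty) (a : α) : ∃ P ⊆ (C \ ρ ⁻¹' {a}).sym2, IsEdgeMatching G P ∧ k ≤ P.ncard := by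
  obtain ⟨u, hu, hua⟩ : ∃ u ∈ C, ∀ v ∈ C, ρ v = a → v = u := by
    by_cases h : ∃ u ∈ C, ρ u = a
    · obtain ⟨u, hu, rfl⟩ := h
      exact ⟨u, hu, fun v hv hva => hρC hv hu hva⟩
    · exact ⟨_, hne.some_mem, fun v hv hva => absurd ⟨v, hv, hva⟩ h⟩
  obtain ⟨P, hPC, hP⟩ := hP u hu
  exact ⟨P, hPC.trans (Set.sym2_mono fun v hv => ⟨hv.1, fun hva => hv.2 (hua v hv.1 hva)⟩), hP⟩

theorem ncard_inter_sym2_eq_of_exchange [Fintype α] [Finite V]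
    (hρ : ∀ ⦃x y⦄, G.Adj x y → ¬ (x ∈ C ∧ y ∈ C) → ρ x = ρ y)
    (hP : ∀ u ∈ C, ∃ P ⊆ (C \ {u}).sym2, IsEdgeMatching G P ∧ k ≤ P.ncard) (hρC : Set.InjOn ρ C)
    (hC : C.ncard = 2 * k + 1) (hM : IsEdgeMatching G M) (hM₁ : IsEdgeMatching G M₁)
    (hmax : ∀ E, IsEdgeMatching G E → E.ncard ≤ M₁.ncard) (hle : M₁.ncard ≤ M.ncard)
    (hM₁C : k ≤ (M₁ ∩ C.sym2).ncard) (hM₁out : M₁ \ C.sym2 ⊆ Cᶜ.sym2) :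
    (M ∩ C.sym2).ncard = k := by
  have hup : ∀ {E}, IsEdgeMatching G E → (E ∩ C.sym2).ncard ≤ k := fun hE => by
    have := (hE.mono Set.inter_subset_left).two_mul_ncard_le (Set.inter_subset_right (t := C.sym2))
    omega
  have hne : C.Nonempty := Set.nonempty_of_ncard_ne_zero (by omega)
  have := ncard_sdiff_sym2_le hρ (exists_isEdgeMatching_sdiff_fiber hP hρC hne) hM hM₁ hmax
    (hup hM₁) hM₁out
  have h₁ := Set.ncard_inter_add_ncard_sdiff_eq_ncard M₁ C.sym2
  have h₂ := Set.ncard_inter_add_ncard_sdiff_eq_ncard M C.sym2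
  have := hup hM
  omega

end Exchange

namespace SimpleGraph.Walk

variable {G : SimpleGraph V} {C : Set V}

/-- The edges of a walk in the positions `0, 2, 4, …`. -/
def evenEdges : {u w : V} → G.Walk u w → List (Sym2 V)
  | _, _, .nil => []
  | _, _, .cons (u := a) (v := b) _ .nil => [s(a, b)]
  | _, _, .cons (u := a) (v := b) _ (.cons _ q) => s(a, b) :: evenEdges q

/-- The edges of a walk in the positions `1, 3, 5, …`. -/
def oddEdges : {u w : V} → G.Walk u w → List (Sym2 V)
  | _, _, .nil => []
  | _, _, .cons _ q => evenEdges q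

@[simp] lemma evenEdges_nil {u : V} : (nil : G.Walk u u).evenEdges = [] := rfl

@[simp] lemma oddEdges_nil {u : V} : (nil : G.Walk u u).oddEdges = [] := rfl

@[simp] lemma evenEdges_cons {u v w : V} (h : G.Adj u v) (q : G.Walk v w) :
    (cons h q).evenEdges = s(u, v) :: q.oddEdges := by
  cases q <;> rfl

@[simp] lemma oddEdges_cons {u v w : V} (h : G.Adj u v) (q : G.Walk v w) :
    (cons h q).oddEdges = q.evenEdges := rfl

lemma perm_evenEdges_append_oddEdges {u w : V} (p : G.Walk u w) :
    (p.evenEdges ++ p.oddEdges).Perm p.edges := by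
  induction p with
  | nil => simp
  | cons h q ih => simpa using List.perm_append_comm.trans ih

lemma mem_edges_of_mem_evenEdges {u w : V} {p : G.Walk u w} {e : Sym2 V}
    (he : e ∈ p.evenEdges) : e ∈ p.edges :=
  p.perm_evenEdges_append_oddEdges.subset (List.mem_append_left _ he)

lemma mem_edges_of_mem_oddEdges {u w : V} {p : G.Walk u w} {e : Sym2 V}
    (he : e ∈ p.oddEdges) : e ∈ p.edges :=
  p.perm_evenEdges_append_oddEdges.subset (List.mem_append_right _ he)

lemma length_evenEdges : ∀ {u w : V} (p : G.Walk u w), p.evenEdges.length = (p.length + 1) / 2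
  | _, _, .nil => by simp
  | _, _, .cons _ .nil => by simp
  | _, _, .cons _ (.cons _ q) => by
    simp only [evenEdges_cons, oddEdges_cons, List.length_cons, length_evenEdges q, length_cons]
    omega

lemma length_oddEdges {u w : V} (p : G.Walk u w) : p.oddEdges.length = p.length / 2 := by
  cases p <;> simp [length_evenEdges]

lemma IsTrail.nodup_evenEdges_append_oddEdges {u w : V} {p : G.Walk u w} (hp : p.IsTrail) :
    (p.evenEdges ++ p.oddEdges).Nodup :=
  p.perm_evenEdges_append_oddEdges.nodup_iff.mpr hp.edges_nodup

lemma IsTrail.ncard_oddEdges {u w : V} {p : G.Walk u w} (hp : p.IsTrail) :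
    {e | e ∈ p.oddEdges}.ncard = p.length / 2 := by
  rw [List.ncard_setOf_mem (List.nodup_append.mp hp.nodup_evenEdges_append_oddEdges).2.1,
    length_oddEdges]

lemma evenEdges_subset_and_oddEdges_subset_compl {S : Set (Sym2 V)} :
    ∀ {u w : V} {p : G.Walk u w}, p.edges.IsChain (fun e f => (e ∈ S ↔ f ∉ S)) →
      (∀ e ∈ p.edges.head?, e ∈ S) → {e | e ∈ p.evenEdges} ⊆ S ∧ {e | e ∈ p.oddEdges} ⊆ Sᶜ := by
  intro u w p
  induction p generalizing S with
  | nil => simp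
  | cons h q ih =>
    intro hchain hhead
    have hs := hhead _ rfl
    have hq := ih (S := Sᶜ) (hchain.tail.imp fun e f hef => by simp only [Set.mem_compl_iff]; tauto)
      (fun f hf => by
        obtain ⟨l, hl⟩ : ∃ l, q.edges = f :: l := ⟨_, List.eq_cons_of_mem_head? hf⟩
        rw [edges_cons, hl, List.isChain_cons_cons] at hchain
        exact hchain.1.mp hs)
    simp only [evenEdges_cons, oddEdges_cons, List.mem_cons, Set.ofPred_or, Set.ofPred_eq_eq_singleton]
    exact ⟨Set.union_subset (Set.singleton_subset_iff.mpr hs) (compl_compl S ▸ hq.2), hq.1⟩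

lemma IsPath.isEdgeMatching_evenEdges : ∀ {u w : V} {p : G.Walk u w}, p.IsPath →
    IsEdgeMatching G {e | e ∈ p.evenEdges}
  | _, _, .nil, _ => by simp [IsEdgeMatching]
  | _, _, .cons h .nil, _ => by simp [IsEdgeMatching, h]
  | _, _, .cons (u := a) (v := b) h (.cons h' q), hp => by
    have ha : a ∉ (cons h' q).support := ((cons_isPath_iff _ _).mp hp).2
    have hb : b ∉ q.support := ((cons_isPath_iff _ _).mp hp.of_cons).2
    refine ⟨fun e he => (cons h (cons h' q)).edges_subset_edgeSet (mem_edges_of_mem_evenEdges he),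
      ?_⟩
    have hset : {e | e ∈ (cons h (cons h' q)).evenEdges} = insert s(a, b) {e | e ∈ q.evenEdges} := by
      ext
      simp
    rw [hset, Set.pairwiseDisjoint_insert]
    refine ⟨hp.of_cons.of_cons.isEdgeMatching_evenEdges.2,
      fun f hf _ => Set.disjoint_left.mpr fun v hv hvf => ?_⟩
    have hvq : v ∈ q.support := mem_support_of_mem_edges (mem_edges_of_mem_evenEdges hf) hvf
    rcases Sym2.mem_iff.mp hv with rfl | rfl
    · exact ha (by simp [hvq])
    · exact hb hvq

lemma IsPath.isEdgeMatching_oddEdges {u w : V} {p : G.Walk u w} (hp : p.IsPath) :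
    IsEdgeMatching G {e | e ∈ p.oddEdges} := by
  cases p with
  | nil => simp [IsEdgeMatching]
  | cons h q => exact hp.of_cons.isEdgeMatching_evenEdges

lemma IsPath.start_notMem_of_mem_oddEdges {u w : V} {p : G.Walk u w} (hp : p.IsPath)
    {e : Sym2 V} (he : e ∈ p.oddEdges) : u ∉ e := by
  cases p with
  | nil => simp at he
  | cons h q =>
    exact fun hu => ((cons_isPath_iff _ _).mp hp).2
      (mem_support_of_mem_edges (mem_edges_of_mem_evenEdges he) hu)

lemma IsPath.end_notMem_of_mem_evenEdges : ∀ {u w : V} {p : G.Walk u w}, p.IsPath →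
    Even p.length → ∀ {e : Sym2 V}, e ∈ p.evenEdges → w ∉ e
  | _, _, .nil, _, _, _, he => by simp at he
  | _, _, .cons h .nil, _, heven, _, _ => by simp at heven
  | _, _, .cons (u := a) (v := b) h (.cons h' q), hp, heven, e, he => by
    have ha : a ∉ (cons h' q).support := ((cons_isPath_iff _ _).mp hp).2
    have hb : b ∉ q.support := ((cons_isPath_iff _ _).mp hp.of_cons).2
    simp only [evenEdges_cons, oddEdges_cons, List.mem_cons] at he
    rcases he with rfl | he
    · intro hw
      rcases Sym2.mem_iff.mp hw with hwa | hwb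
      · exact ha (hwa ▸ (cons h' q).end_mem_support)
      · exact hb (hwb ▸ q.end_mem_support)
    · exact hp.of_cons.of_cons.end_notMem_of_mem_evenEdges
        (by simpa [Nat.even_add_one] using heven) he

lemma exists_mem_evenEdges_of_ne : ∀ {u w : V} {p : G.Walk u w}, Even p.length →
    ∀ {v : V}, v ∈ p.support → v ≠ w → ∃ e ∈ p.evenEdges, v ∈ e
  | _, _, .nil, _, _, hv, hvw => absurd (by simpa using hv) hvw
  | _, _, .cons h .nil, heven, _, _, _ => by simp at heven
  | _, _, .cons (u := a) (v := b) h (.cons h' q), heven, v, hv, hvw => by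
    simp only [support_cons, List.mem_cons] at hv
    rcases hv with rfl | rfl | hv
    · exact ⟨s(v, b), by simp, Sym2.mem_mk_left _ _⟩
    · exact ⟨s(a, v), by simp, Sym2.mem_mk_right _ _⟩
    · obtain ⟨e, he, hve⟩ := exists_mem_evenEdges_of_ne (p := q)
        (by simpa [Nat.even_add_one] using heven) hv hvw
      exact ⟨e, by simp [he], hve⟩

lemma exists_mem_oddEdges_of_ne {u w : V} {p : G.Walk u w} (hodd : Odd p.length) {v : V}
    (hv : v ∈ p.support) (hvu : v ≠ u) (hvw : v ≠ w) : ∃ e ∈ p.oddEdges, v ∈ e := by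
  cases p with
  | nil => simp at hodd
  | cons h q =>
    rw [support_cons, List.mem_cons] at hv
    exact exists_mem_evenEdges_of_ne (by simpa [Nat.odd_add_one] using hodd) (hv.resolve_left hvu)
      hvw

lemma IsCycle.isEdgeMatching_oddEdges {x : V} {c : G.Walk x x} (hc : c.IsCycle) :
    IsEdgeMatching G {e | e ∈ c.oddEdges} := by
  cases c with
  | nil => exact absurd hc not_isCycle_nil
  | cons h q => exact ((cons_isCycle_iff _ _).mp hc).1.isEdgeMatching_evenEdges

lemma IsCycle.oddEdges_subset_sym2 {x : V} {c : G.Walk x x} (hc : c.IsCycle)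
    (hodd : Odd c.length) (hcC : ∀ v, v ∈ c.support ↔ v ∈ C) :
    {e | e ∈ c.oddEdges} ⊆ (C \ {x}).sym2 := by
  cases c with
  | nil => simp
  | cons h q =>
    refine fun e he => Set.mem_sym2_iff_subset.mpr fun v hv => ⟨(hcC v).mp ?_, fun hvx => ?_⟩
    · exact List.mem_cons_of_mem _ (mem_support_of_mem_edges (mem_edges_of_mem_evenEdges he) hv)
    · exact ((cons_isCycle_iff _ _).mp hc).1.end_notMem_of_mem_evenEdges
        (by simpa [Nat.odd_add_one] using hodd) he (hvx ▸ hv)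

lemma IsCycle.ncard_eq_length {x : V} {c : G.Walk x x} (hc : c.IsCycle)
    (hcC : ∀ v, v ∈ c.support ↔ v ∈ C) : C.ncard = c.length := by
  have hC : C = {v | v ∈ c.support.tail} := by
    ext v
    rw [← hcC, Set.mem_ofPred_eq]
    refine ⟨fun hv => ?_, List.mem_of_mem_tail⟩
    rw [← c.cons_tail_support, List.mem_cons] at hv
    exact hv.elim (fun h => h ▸ c.end_mem_tail_support hc.not_nil) id
  rw [hC, List.ncard_setOf_mem hc.support_nodup, List.length_tail, length_support,
    Nat.add_sub_cancel]

lemma IsCycle.exists_isEdgeMatching_sdiff [DecidableEq V] {x : V} {c : G.Walk x x}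
    (hc : c.IsCycle) (hodd : Odd c.length) (hcC : ∀ v, v ∈ c.support ↔ v ∈ C) {u : V}
    (hu : u ∈ C) : ∃ P ⊆ (C \ {u}).sym2, IsEdgeMatching G P ∧ P.ncard = c.length / 2 := by
  have huc := (hcC u).mpr hu
  have hc' := hc.rotate huc
  exact ⟨_, hc'.oddEdges_subset_sym2 (by rwa [length_rotate])
      fun v => (mem_support_rotate_iff ..).trans (hcC v),
    hc'.isEdgeMatching_oddEdges, by rw [hc'.isTrail.ncard_oddEdges, length_rotate]⟩

lemma one_lt_length_of_mem_support {x y z : V} {p : G.Walk x y} (hz : z ∈ p.support)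
    (hzx : z ≠ x) (hzy : z ≠ y) : 1 < p.length := by
  cases p with
  | nil => simp_all
  | cons h q =>
    cases q with
    | nil => simp_all
    | cons h' q => simp

lemma IsPath.start_notMem_support_tail {x y : V} {p : G.Walk x y} (hp : p.IsPath) :
    x ∉ p.support.tail := by
  have := hp.support_nodup
  rw [← p.cons_tail_support, List.nodup_cons] at this
  exact this.1

lemma IsPath.isCycle_append_of_support {x y : V} {p : G.Walk x y} {q : G.Walk y x}
    (hp : p.IsPath) (hq : q.IsPath) (hlen : 1 < p.length)
    (hpC : ∀ v ∈ p.support, v ∈ C → v = x ∨ v = y) (hqC : ∀ v ∈ q.support, v ∈ C) :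
    (p.append q).IsCycle := by
  refine hp.isCycle_append hq (List.disjoint_left.mpr fun v hvp hvq => ?_) (Or.inl hlen)
  rcases hpC v (List.mem_of_mem_tail hvp) (hqC v (List.mem_of_mem_tail hvq)) with rfl | rfl
  · exact hp.start_notMem_support_tail hvp
  · exact hq.start_notMem_support_tail hvq

lemma exists_mem_notMem_of_mem_edges {x u : V} {W : G.Walk x u}
    (hW : ∀ v ∈ W.support, v ∈ C → v = u) {e : Sym2 V} (he : e ∈ W.edges) : ∃ z ∈ e, z ∉ C := by
  induction e with
  | _ a b =>
    by_contra! hab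
    have ha := hW a (W.fst_mem_support_of_mem_edges he) (hab a (Sym2.mem_mk_left a b))
    have hb := hW b (W.snd_mem_support_of_mem_edges he) (hab b (Sym2.mem_mk_right a b))
    exact (W.adj_of_mem_edges he).ne (ha.trans hb.symm)

end SimpleGraph.Walk

open SimpleGraph.Walk

lemma IsEdgeMatching.symmDiff_edges [Finite V] {G : SimpleGraph V} {M : Set (Sym2 V)}
    (hM : IsEdgeMatching G M) {b r : V} {p : G.Walk b r} (hp : p.IsPath) (heven : Even p.length)
    (halt : p.edges.IsChain fun e f => (e ∈ M ↔ f ∉ M)) (hfirst : ∀ e ∈ p.edges.head?, e ∈ M)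
    (hr : ∀ e ∈ M, r ∉ e) :
    IsEdgeMatching G (symmDiff M {e | e ∈ p.edges}) ∧
      (symmDiff M {e | e ∈ p.edges}).ncard = M.ncard ∧
      ∀ e ∈ symmDiff M {e | e ∈ p.edges}, b ∉ e := by
  obtain ⟨hEv, hOd⟩ := p.evenEdges_subset_and_oddEdges_subset_compl halt hfirst
  have hset : symmDiff M {e | e ∈ p.edges} =
      (M \ {e | e ∈ p.evenEdges}) ∪ {e | e ∈ p.oddEdges} := by
    ext e
    have := p.perm_evenEdges_append_oddEdges.mem_iff (a := e)
    simp only [Set.mem_symmDiff, Set.mem_ofPred_eq, Set.mem_union, Set.mem_sdiff, ← this,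
      List.mem_append]
    have := @hEv e
    have := @hOd e
    simp only [Set.mem_ofPred_eq, Set.mem_compl_iff] at *
    tauto
  have hout : M \ {e | e ∈ p.evenEdges} ⊆ {v | v ∉ p.support}.sym2 := by
    refine fun e he => Set.mem_sym2_iff_subset.mpr fun v hv hvp => ?_
    by_cases hvr : v = r
    · exact hr e he.1 (hvr ▸ hv)
    obtain ⟨f, hf, hvf⟩ := p.exists_mem_evenEdges_of_ne heven hvp hvr
    exact he.2 (hM.eq_of_mem_of_mem he.1 (hEv hf) hv hvf ▸ hf)
  have hin : {e | e ∈ p.oddEdges} ⊆ {v | v ∈ p.support}.sym2 := fun e he =>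
    Set.mem_sym2_iff_subset.mpr fun v hv =>
      mem_support_of_mem_edges (mem_edges_of_mem_oddEdges he) hv
  have hdisj : Disjoint {v | v ∉ p.support} {v | v ∈ p.support} :=
    Set.disjoint_left.mpr fun _ h1 h2 => h1 h2
  rw [hset]
  refine ⟨(hM.mono Set.sdiff_subset).union hp.isEdgeMatching_oddEdges hout hin hdisj, ?_, ?_⟩
  · have hnd := List.nodup_append.mp hp.isTrail.nodup_evenEdges_append_oddEdges
    have := Set.ncard_sdiff_add_ncard_of_subset hEv
    rw [Set.ncard_union_eq ((Set.disjoint_sym2 hdisj).mono hout hin),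
      List.ncard_setOf_mem hnd.2.1, length_oddEdges]
    rw [List.ncard_setOf_mem hnd.1, length_evenEdges] at this
    obtain ⟨m, hm⟩ := heven
    omega
  · rintro e (he | he) hb
    · exact Set.mem_sym2_iff_subset.mp (hout he) hb p.start_mem_support
    · exact hp.start_notMem_of_mem_oddEdges he hb

section OddCycle

variable {G : SimpleGraph V} {C C' : Set V}

lemma IsOddCycle.odd_ncard (hC : IsOddCycle G C) : Odd C.ncard := by
  obtain ⟨x, c, hc, hodd, hcC⟩ := hC
  rwa [hc.ncard_eq_length hcC]

lemma IsOddCycle.exists_isEdgeMatching_sdiff (hC : IsOddCycle G C) {u : V} (hu : u ∈ C) :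
    ∃ P ⊆ (C \ {u}).sym2, IsEdgeMatching G P ∧ C.ncard / 2 ≤ P.ncard := by
  classical
  obtain ⟨x, c, hc, hodd, hcC⟩ := hC
  obtain ⟨P, hPC, hP, hPcard⟩ := hc.exists_isEdgeMatching_sdiff hodd hcC hu
  exact ⟨P, hPC, hP, by rw [hPcard, hc.ncard_eq_length hcC]⟩

lemma IsOddCycle.exists_isOddCycle_of_ear [DecidableEq V] (hC : IsOddCycle G C) {x y : V}
    (hx : x ∈ C) (hy : y ∈ C) (hxy : x ≠ y) {p : G.Walk x y} (hp : p.IsPath)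
    (hpC : ∀ v ∈ p.support, v ∈ C → v = x ∨ v = y) {z : V} (hz : z ∈ p.support) (hzC : z ∉ C) :
    ∃ C', IsOddCycle G C' ∧ x ∈ C' ∧ z ∈ C' := by
  have hlen := one_lt_length_of_mem_support hz (fun h => hzC (h ▸ hx)) (fun h => hzC (h ▸ hy))
  obtain ⟨u, c, hc, hodd, hcC⟩ := hC
  have hxc := (hcC x).mpr hx
  set c' := c.rotate x hxc
  have hc' : c'.IsCycle := hc.rotate hxc
  have hc'C : ∀ v ∈ c'.support, v ∈ C := fun v hv => (hcC v).mp ((mem_support_rotate_iff ..).mp hv)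
  have hyc' : y ∈ c'.support := (mem_support_rotate_iff ..).mpr ((hcC y).mpr hy)
  have hspec := c'.take_spec hyc'
  have hd : (c'.dropUntil y hyc').IsPath :=
    (hspec ▸ hc').isPath_of_append_right (not_nil_of_ne hxy)
  have ht : (c'.takeUntil y hyc').reverse.IsPath := (hc'.isPath_takeUntil hyc').reverse
  have hlen' : (c'.takeUntil y hyc').reverse.length + (c'.dropUntil y hyc').length = c.length := by
    rw [length_reverse, ← length_append, hspec, length_rotate]
  -- the two arcs of `C` between `x` and `y` have lengths of different parity
  obtain ⟨q, hq, hqC, hqodd⟩ : ∃ q : G.Walk y x, q.IsPath ∧ (∀ v ∈ q.support, v ∈ C) ∧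
      Odd (p.length + q.length) := by
    rcases Nat.even_or_odd (p.length + (c'.dropUntil y hyc').length) with h | h
    · refine ⟨_, ht, fun v hv => hc'C v ?_, ?_⟩
      · rw [support_reverse, List.mem_reverse] at hv
        exact support_takeUntil_subset_support _ _ hv
      · obtain ⟨a, ha⟩ := h
        obtain ⟨b, hb⟩ := hodd
        exact ⟨a + b - (c'.dropUntil y hyc').length, by omega⟩
    · exact ⟨_, hd, fun v hv => hc'C v (support_dropUntil_subset_support _ _ hv), h⟩
  exact ⟨{v | v ∈ (p.append q).support},
    ⟨x, _, hp.isCycle_append_of_support hq hlen hpC hqC, by rwa [length_append], fun _ => Iff.rfl⟩,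
    start_mem_support _, (mem_support_append_iff _ _).mpr (Or.inl hz)⟩

lemma RDisjoint.subset_reach (h : RDisjoint G) (hC : IsOddCycle G C) : C ⊆ reach G C := by
  obtain ⟨-, F, ⟨M, hM, hF⟩, -⟩ := h.2.1 C hC
  obtain ⟨b, r, w, p, -, -, hwC, -, rfl⟩ := id hF
  exact fun v hv => ⟨_, ⟨M, hM, hF⟩, Or.inl ((hwC v).mpr hv)⟩

lemma RDisjoint.eq_of_mem_of_mem (h : RDisjoint G) (hC : IsOddCycle G C) (hC' : IsOddCycle G C')
    {v : V} (hv : v ∈ C) (hv' : v ∈ C') : C = C' := by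
  by_contra hne
  exact (Set.eq_empty_iff_forall_notMem.mp (h.2.2 C C' hC hC' hne)) v
    ⟨h.subset_reach hC hv, h.subset_reach hC' hv'⟩

end OddCycle

section Attach

variable {G : SimpleGraph V} {C : Set V}

def attachSet (G : SimpleGraph V) (C : Set V) (v : V) : Set V :=
  {u | u ∈ C ∧ ∃ W : G.Walk v u, ∀ x ∈ W.support, x ∈ C → x = u}

lemma attachSet_of_mem {v : V} (hv : v ∈ C) : attachSet G C v = {v} := by
  ext u
  refine ⟨fun ⟨_, W, hW⟩ => (hW v W.start_mem_support hv).symm, ?_⟩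
  rintro rfl
  exact ⟨hv, .nil, fun x hx _ => by simpa using hx⟩

lemma attachSet_injOn : Set.InjOn (attachSet G C) C := fun u hu v hv huv => by
  rwa [attachSet_of_mem hu, attachSet_of_mem hv, Set.singleton_eq_singleton_iff] at huv

lemma attachSet_subset_of_adj {x y : V} (hxy : G.Adj x y) (hx : x ∉ C) :
    attachSet G C y ⊆ attachSet G C x := by
  rintro u ⟨hu, W, hW⟩
  refine ⟨hu, .cons hxy W, fun z hz hzC => ?_⟩
  rw [support_cons, List.mem_cons] at hz
  rcases hz with rfl | hz
  · exact absurd hzC hx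
  · exact hW z hz hzC

lemma RDisjoint.attachSet_subsingleton (h : RDisjoint G) (hC : IsOddCycle G C) (x : V) :
    (attachSet G C x).Subsingleton := by
  classical
  rintro u ⟨hu, W, hW⟩ u' ⟨hu', W', hW'⟩
  by_contra hne
  set q := (W.reverse.append W').bypass
  have hqC : ∀ v ∈ q.support, v ∈ C → v = u ∨ v = u' := by
    intro v hv hvC
    rcases (mem_support_append_iff _ _).mp (support_bypass_subset_support _ hv) with hv | hv
    · exact Or.inl (hW v (by simpa using hv) hvC)
    · exact Or.inr (hW' v hv hvC)
  obtain ⟨e, he⟩ := List.exists_mem_of_ne_nil q.edges fun hnil => hne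
    (eq_of_length_eq_zero (by simpa [← length_edges] using hnil))
  have he' := edges_bypass_subset_edges _ he
  rw [edges_append, List.mem_append, edges_reverse, List.mem_reverse] at he'
  obtain ⟨z, hze, hzC⟩ : ∃ z ∈ e, z ∉ C :=
    he'.elim (exists_mem_notMem_of_mem_edges hW) (exists_mem_notMem_of_mem_edges hW')
  obtain ⟨C', hC', huC', hzC'⟩ := hC.exists_isOddCycle_of_ear hu hu' hne (bypass_isPath _) hqC
    (mem_support_of_mem_edges he hze) hzC
  exact hzC ((h.eq_of_mem_of_mem hC hC' hu huC') ▸ hzC')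

lemma RDisjoint.attachSet_eq_of_adj (h : RDisjoint G) (hC : IsOddCycle G C) {x y : V}
    (hxy : G.Adj x y) (hxyC : ¬ (x ∈ C ∧ y ∈ C)) : attachSet G C x = attachSet G C y := by
  by_cases hx : x ∈ C
  · have hy : y ∉ C := fun hy => hxyC ⟨hx, hy⟩
    rw [attachSet_of_mem hx]
    exact ((h.attachSet_subsingleton hC y).eq_singleton_of_mem
      (attachSet_subset_of_adj hxy.symm hy (by simp [attachSet_of_mem hx]))).symm
  · by_cases hy : y ∈ C
    · rw [attachSet_of_mem hy]
      exact (h.attachSet_subsingleton hC x).eq_singleton_of_mem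
        (attachSet_subset_of_adj hxy hx (by simp [attachSet_of_mem hy]))
    · exact (attachSet_subset_of_adj hxy.symm hy).antisymm (attachSet_subset_of_adj hxy hx)

end Attach

lemma IsFlowerOn.exists_isEdgeMatching [Finite V] {G : SimpleGraph V} {M₀ : G.Subgraph}
    (hM₀ : M₀.IsMatching) {C F : Set V} (hF : IsFlowerOn G M₀ C F) :
    ∃ M₁ : Set (Sym2 V), IsEdgeMatching G M₁ ∧ M₁.ncard = M₀.edgeSet.ncard ∧
      C.ncard / 2 ≤ (M₁ ∩ C.sym2).ncard ∧ M₁ \ C.sym2 ⊆ Cᶜ.sym2 := by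
  obtain ⟨b, r, w, p, hw, hp, hwC, hpw, -⟩ := hF
  have hM := hM₀.isEdgeMatching
  have hBM : {e | e ∈ w.oddEdges} ⊆ M₀.edgeSet := fun e he => not_not.mp
    ((w.evenEdges_subset_and_oddEdges_subset_compl (S := M₀.edgeSetᶜ)
      (List.IsChain.imp (fun e f hef => by simp only [Set.mem_compl_iff]; tauto) hw.alt)
      hw.first).2 he)
  have hBC := hw.cyc.oddEdges_subset_sym2 hw.odd hwC
  have hpC : ∀ v ∈ p.support, v ≠ b → v ∉ C := fun v hv hvb hvC =>
    hvb (hpw v hv ((hwC v).mpr hvC))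
  obtain ⟨hM₁, hcard, hb⟩ := hM.symmDiff_edges hp.path hp.even hp.alt hp.first
    fun e he hr => hp.root (Subgraph.mem_verts_of_mem_edge he hr)
  refine ⟨_, hM₁, hcard, ?_, ?_⟩
  · rw [hw.cyc.ncard_eq_length hwC, ← hw.cyc.isTrail.ncard_oddEdges]
    refine Set.ncard_le_ncard fun e he => ⟨Or.inl ⟨hBM he, fun hep => ?_⟩,
      Set.sym2_mono Set.sdiff_subset (hBC he)⟩
    have hvC := Set.mem_sym2_iff_subset.mp (hBC he) (Sym2.out_fst_mem e)
    exact hpC _ (mem_support_of_mem_edges hep (Sym2.out_fst_mem e)) hvC.2 hvC.1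
  · rintro e ⟨he, heC⟩
    refine Set.mem_sym2_iff_subset.mpr fun v hv hvC => heC ?_
    have hvb : v ≠ b := fun hvb => hb e he (hvb ▸ hv)
    obtain ⟨f, hf, hvf⟩ := exists_mem_oddEdges_of_ne hw.odd ((hwC v).mpr hvC) hvb hvb
    rcases he with ⟨heM, -⟩ | ⟨hep, -⟩
    · exact hM.eq_of_mem_of_mem heM (hBM hf) hv hvf ▸ Set.sym2_mono Set.sdiff_subset (hBC hf)
    · exact absurd hvC (hpC v (mem_support_of_mem_edges hep hv) hvb)

/-- In an `R`-disjoint graph, every maximum matching contains exactly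
`⌊|V(C)|/2⌋` edges from each odd cycle `C`. -/
theorem stmt_14 {V : Type u} [Fintype V] (G : SimpleGraph V) (h : RDisjoint G)
    (M : G.Subgraph) (hM : IsMaxMatching G M) (C : Set V) (hC : IsOddCycle G C) :
    {e ∈ M.edgeSet | ∀ v ∈ e, v ∈ C}.ncard = C.ncard / 2 := by
  classical
  obtain ⟨-, F, ⟨M₀, hM₀, hF⟩, -⟩ := h.2.1 C hC
  obtain ⟨M₁, hM₁, hcard, hM₁C, hM₁out⟩ := hF.exists_isEdgeMatching hM₀.1
  have hset : {e ∈ M.edgeSet | ∀ v ∈ e, v ∈ C} = M.edgeSet ∩ C.sym2 := by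
    ext e
    simp [Set.mem_sym2_iff_subset, Set.subset_def]
  rw [hset]
  exact ncard_inter_sym2_eq_of_exchange (fun _ _ hxy hxyC => h.attachSet_eq_of_adj hC hxy hxyC)
    (fun _ hu => hC.exists_isEdgeMatching_sdiff hu) attachSet_injOn
    (Nat.two_mul_div_two_add_one_of_odd hC.odd_ncard).symm hM.1.isEdgeMatching hM₁
    (fun _ hE => hcard ▸ hM₀.ncard_le hE) (hcard ▸ hM.2 _ hM₀.1) hM₁C hM₁out
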